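/- For the cyclic edge perturbation on the odd circle Z/(2l+1)Z with g(x) = x−1: the kernel \tilde{K}(x,y) = K(x, g^{-1}y) has invariant probability measure \tilde{π} given by \tilde{π}(x) = 2(1+ε)/(ε²+2Nε+2N) for x ≠ 0,1, \tilde{π}(0) = (ε+1)(ε+2)/(ε²+2Nε+2N), \tilde{π}(1) = (ε+2)/(ε²+2Nε+2N), where N = 2l+1; consequently max \tilde{π} ≤ (1+ε) min \tilde{π}. -/

import Mathlib

/-!
The walk `K̃(x, y) = K(x, y + 1)` either stays put (with probability `K(x, x + 1)`) or moves two
steps back (with probability `K(x, x - 1)`). Hence `π` is `K̃`-invariant as soon as the backward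
flux `π x * K(x, x - 1)` does not depend on `x`: the mass arriving at `y` from `y + 2` then equals
the mass leaving `y`. For the edge perturbation `π̃` has backward flux `(1 + ε) / (ε² + 2Nε + 2N)`
at every vertex, and its values all lie between `(ε + 2) / (ε² + 2Nε + 2N)` and `1 + ε` times that.
-/

open BigOperators Finset

def tilde {V : Type*} [Fintype V] (K : Matrix V V ℝ) (g : Equiv.Perm V) : Matrix V V ℝ :=
  Matrix.of fun x y => K x (g.symm y)

/-- The cyclic edge perturbation kernel (5.1) on the circle Z/NZ: simple random walk
with the edge (0,1) given weight 1+ε. -/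
noncomputable def Kcirc (N : ℕ) (ε : ℝ) : Matrix (ZMod N) (ZMod N) ℝ :=
  Matrix.of fun x y =>
    if (x = 0 ∧ y = 1) ∨ (x = 1 ∧ y = 0) then (1 + ε) / (2 + ε)
    else if (x = 0 ∧ y = -1) ∨ (x = 1 ∧ y = 2) then 1 / (2 + ε)
    else if y = x + 1 ∨ y = x - 1 then 1 / 2
    else 0

lemma ZMod.two_ne_zero_of_three_le {N : ℕ} (hN : 3 ≤ N) : (2 : ZMod N) ≠ 0 := by
  intro h
  have : N ∣ 2 := (ZMod.natCast_eq_zero_iff 2 N).mp (by exact_mod_cast h)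
  have := Nat.le_of_dvd two_pos this
  omega

lemma neg_one_ne_one_of_two_ne_zero {R : Type*} [CommRing R] (h2 : (2 : R) ≠ 0) : (-1 : R) ≠ 1 :=
  fun h => h2 (by linear_combination -h)

section NearestNeighbour

variable {N : ℕ} [NeZero N]

theorem sum_mul_tilde_eq_of_backward_flux_eq (K : Matrix (ZMod N) (ZMod N) ℝ)
    (g : Equiv.Perm (ZMod N)) (hg : ∀ x, g x = x - 1) (h2 : (2 : ZMod N) ≠ 0)
    (hsupp : ∀ x y, y ≠ x + 1 → y ≠ x - 1 → K x y = 0)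
    (hrow : ∀ x, K x (x + 1) + K x (x - 1) = 1)
    (π : ZMod N → ℝ) (c : ℝ) (hflux : ∀ x, π x * K x (x - 1) = c) (y : ZMod N) :
    ∑ x, π x * tilde K g x y = π y := by
  have hg' : ∀ y, g.symm y = y + 1 := fun y => by rw [Equiv.symm_apply_eq, hg]; ring
  simp only [tilde, Matrix.of_apply, hg']
  have hy : y ≠ y + 2 := fun h => h2 (by linear_combination -h)
  rw [Fintype.sum_eq_add y (y + 2) hy fun x ⟨hxy, hxy2⟩ => by
    rw [hsupp x (y + 1) (fun h => hxy (by linear_combination -h))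
      (fun h => hxy2 (by linear_combination -h)), mul_zero]]
  have hback : π (y + 2) * K (y + 2) (y + 1) = π y * K y (y - 1) := by
    rw [hflux y, ← hflux (y + 2)]; ring_nf
  rw [hback, ← mul_add, hrow, mul_one]

end NearestNeighbour

section EdgePerturbation

variable {N : ℕ} {ε : ℝ}

lemma Kcirc_eq_zero {x y : ZMod N} (h1 : y ≠ x + 1) (h2 : y ≠ x - 1) : Kcirc N ε x y = 0 := by
  simp only [Kcirc, Matrix.of_apply]
  rw [if_neg, if_neg, if_neg (not_or.mpr ⟨h1, h2⟩)]
  · rintro (⟨rfl, rfl⟩ | ⟨rfl, rfl⟩)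
    · exact h2 (by ring)
    · exact h1 (by ring)
  · rintro (⟨rfl, rfl⟩ | ⟨rfl, rfl⟩)
    · exact h1 (by ring)
    · exact h2 (by ring)

lemma Kcirc_apply_sub_one (h2 : (2 : ZMod N) ≠ 0) (x : ZMod N) :
    Kcirc N ε x (x - 1) =
      if x = 0 then 1 / (2 + ε) else if x = 1 then (1 + ε) / (2 + ε) else 1 / 2 := by
  have h1 : (1 : ZMod N) ≠ 0 := fun h => h2 (by linear_combination 2 * h)
  simp only [Kcirc, Matrix.of_apply]
  split_ifs <;> simp_all [neg_one_ne_one_of_two_ne_zero h2]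

lemma Kcirc_apply_add_one (h2 : (2 : ZMod N) ≠ 0) (x : ZMod N) :
    Kcirc N ε x (x + 1) =
      if x = 0 then (1 + ε) / (2 + ε) else if x = 1 then 1 / (2 + ε) else 1 / 2 := by
  have h1 : (1 : ZMod N) ≠ 0 := fun h => h2 (by linear_combination 2 * h)
  simp only [Kcirc, Matrix.of_apply]
  split_ifs <;> simp_all [one_add_one_eq_two]

lemma Kcirc_row_sum (h2 : (2 : ZMod N) ≠ 0) (hε : 2 + ε ≠ 0) (x : ZMod N) :
    Kcirc N ε x (x + 1) + Kcirc N ε x (x - 1) = 1 := by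
  rw [Kcirc_apply_add_one h2, Kcirc_apply_sub_one h2]
  split_ifs <;> field_simp <;> ring

noncomputable def piTilde (N : ℕ) (ε : ℝ) (x : ZMod N) : ℝ :=
  if x = 0 then (ε + 1) * (ε + 2) / (ε ^ 2 + 2 * N * ε + 2 * N)
  else if x = 1 then (ε + 2) / (ε ^ 2 + 2 * N * ε + 2 * N)
  else 2 * (1 + ε) / (ε ^ 2 + 2 * N * ε + 2 * N)

lemma piTilde_mul_Kcirc_sub_one (h2 : (2 : ZMod N) ≠ 0) (hε : 2 + ε ≠ 0) (x : ZMod N) :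
    piTilde N ε x * Kcirc N ε x (x - 1) = (1 + ε) / (ε ^ 2 + 2 * N * ε + 2 * N) := by
  rw [piTilde, Kcirc_apply_sub_one h2]
  split_ifs <;> field_simp <;> ring

lemma sum_piTilde [NeZero N] (hN : 2 ≤ N) (hD : ε ^ 2 + 2 * N * ε + 2 * N ≠ 0) :
    ∑ x, piTilde N ε x = 1 := by
  have : Fact (1 < N) := ⟨hN⟩
  have h1 : (1 : ZMod N) ≠ 0 := one_ne_zero
  have h1mem : (1 : ZMod N) ∈ univ.erase 0 := mem_erase.mpr ⟨h1, mem_univ 1⟩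
  have hrest : ∀ x ∈ (univ.erase 0).erase (1 : ZMod N),
      piTilde N ε x = 2 * (1 + ε) / (ε ^ 2 + 2 * N * ε + 2 * N) := by
    intro x hx
    rw [mem_erase, mem_erase] at hx
    rw [piTilde, if_neg hx.2.1, if_neg hx.1]
  have hcard : (((univ.erase 0).erase (1 : ZMod N)).card : ℝ) = N - 2 := by
    rw [card_erase_of_mem h1mem, card_erase_of_mem (mem_univ 0), card_univ, ZMod.card,
      Nat.sub_sub, Nat.cast_sub hN]
    norm_num
  rw [← add_sum_erase _ _ (mem_univ 0), ← add_sum_erase _ _ h1mem, sum_congr rfl hrest, sum_const,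
    nsmul_eq_mul, hcard, piTilde, piTilde, if_pos rfl, if_neg h1, if_pos rfl, mul_div_assoc',
    ← add_div, ← add_div, div_eq_one_iff_eq hD]
  ring

lemma piTilde_mem_Icc (hε : 0 ≤ ε) (hD : 0 < ε ^ 2 + 2 * N * ε + 2 * N) (x : ZMod N) :
    piTilde N ε x ∈ Set.Icc ((ε + 2) / (ε ^ 2 + 2 * N * ε + 2 * N))
      ((1 + ε) * ((ε + 2) / (ε ^ 2 + 2 * N * ε + 2 * N))) := by
  rw [piTilde, ← mul_div_assoc]
  split_ifs <;> constructor <;> apply div_le_div_of_nonneg_right _ hD.le <;> nlinarith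

end EdgePerturbation

/-- Section 5, case g(x) = x - 1: explicit invariant measure π̃ of K̃, and the
resulting bound max π̃ ≤ (1+ε) min π̃. -/
theorem stmt17 (l : ℕ) (hl : 1 ≤ l) (N : ℕ) [NeZero N] (hN : N = 2 * l + 1) (ε : ℝ) (hε : 0 < ε)
    (g : Equiv.Perm (ZMod N)) (hg : ∀ x, g x = x - 1)
    (π : ZMod N → ℝ)
    (hπ : ∀ x, π x =
      if x = 0 then (ε + 1) * (ε + 2) / (ε ^ 2 + 2 * N * ε + 2 * N)
      else if x = 1 then (ε + 2) / (ε ^ 2 + 2 * N * ε + 2 * N)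
      else 2 * (1 + ε) / (ε ^ 2 + 2 * N * ε + 2 * N)) :
    (∀ x, 0 < π x) ∧ (∑ x, π x = 1) ∧
      (∀ y, ∑ x, π x * tilde (Kcirc N ε) g x y = π y) ∧
      (∀ x y : ZMod N, π x ≤ (1 + ε) * π y) := by
  have h2 : (2 : ZMod N) ≠ 0 := ZMod.two_ne_zero_of_three_le (by omega)
  have hD : 0 < ε ^ 2 + 2 * N * ε + 2 * N := by positivity
  obtain rfl : π = piTilde N ε := funext hπ
  have hbounds := piTilde_mem_Icc hε.le hD
  refine ⟨fun x => (hbounds x).1.trans_lt' (by positivity), sum_piTilde (by omega) hD.ne',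
    fun y => ?_, fun x y => (hbounds x).2.trans (mul_le_mul_of_nonneg_left (hbounds y).1 ?_)⟩
  · exact sum_mul_tilde_eq_of_backward_flux_eq _ g hg h2 (fun _ _ => Kcirc_eq_zero)
      (Kcirc_row_sum h2 (by linarith)) _ _ (piTilde_mul_Kcirc_sub_one h2 (by linarith)) y
  · linarith
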